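/- Let H be a complex Hilbert space, A a continuous linear selfadjoint operator on H, and μ ∈ ℂ such that A − μ and A − \bar μ are invertible. Let φ, ψ ∈ H satisfy ((A − μ)⁻¹φ, ψ) ≠ 0, and define λ := μ + (φ, ψ)/((A − μ)⁻¹φ, ψ). Assume moreover ((A − λ)φ, ψ) ≠ 0, and define ω₂ := (A − λ)φ, ω₁ := (A − \bar λ)ψ, and α := −1/((A − λ)φ, ψ). Then the nonsymmetric rank-one perturbation Ã = A + α(·,ω₁)ω₂ has the dual pair of eigenvalues (μ, λ): Ãφ = λφ; Ãφ_μ = μφ_μ where φ_μ := (A − λ)(A − μ)⁻¹φ; Ã*ψ = \bar λ ψ; and Ã*ψ_{\bar μ} = \bar μ ψ_{\bar μ} where ψ_{\bar μ} := (A − \bar λ)(A − \bar μ)⁻¹ψ. -/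

import Mathlib

open ContinuousLinearMap

local notation "⟪" x ", " y "⟫" => @inner ℂ _ _ x y

/-- The nonsymmetric rank-one perturbation `Ã = A + α(·,ω₁)ω₂`. -/
noncomputable def rankOnePert {H : Type*} [NormedAddCommGroup H] [InnerProductSpace ℂ H]
    (A : H →L[ℂ] H) (α : ℂ) (ω₁ ω₂ : H) : H →L[ℂ] H :=
  A + α • (innerSL ℂ ω₁).smulRight ω₂

/-! If `α (x, ω₁) = -1` and `ω₂ = (A - c)x`, then `Ãx = Ax - (A - c)x = cx`, and the same
computation applies to `Ã* = A + ᾱ(·, ω₂)ω₁`. So the four eigenrelations reduce to scalar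
identities. The choice of `λ` makes `ψ` orthogonal to `(A - λ)(A - μ)⁻¹φ`, whence
`((A - λ)²(A - μ)⁻¹φ, ψ) = ((A - λ)φ, ψ) = -1/α`; on the adjoint side, `(A - μ̄)⁻¹ψ` is moved
across the inner product using that polynomials in `A` commute. -/

section

variable {H : Type*} [NormedAddCommGroup H] [InnerProductSpace ℂ H]

theorem rankOnePert_apply (A : H →L[ℂ] H) (α : ℂ) (ω₁ ω₂ x : H) :
    rankOnePert A α ω₁ ω₂ x = A x + (α * ⟪ω₁, x⟫) • ω₂ := by
  simp [rankOnePert, smul_smul]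

theorem adjoint_rankOnePert [CompleteSpace H] (A : H →L[ℂ] H) (α : ℂ) (ω₁ ω₂ : H) :
    adjoint (rankOnePert A α ω₁ ω₂) = rankOnePert (adjoint A) (starRingEnd ℂ α) ω₂ ω₁ := by
  ext x
  refine ext_inner_left ℂ fun v => ?_
  rw [adjoint_inner_right, rankOnePert_apply, rankOnePert_apply]
  simp only [inner_add_left, inner_add_right, inner_smul_left, inner_smul_right, map_mul,
    inner_conj_symm, adjoint_inner_right]
  ring

theorem rankOnePert_apply_eq_smul_self {A : H →L[ℂ] H} {α c : ℂ} {ω₁ x : H}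
    (hx : α * ⟪ω₁, x⟫ = -1) : rankOnePert A α ω₁ ((A - c • 1) x) x = c • x := by
  rw [rankOnePert_apply, hx]
  simp only [sub_apply, smul_apply, one_apply_eq_self]
  module

theorem rankOnePert_apply_eq_smul_shift {A : H →L[ℂ] H} {α c d : ℂ} {ω₁ v x : H}
    (hv : (A - d • 1) v = x) (hx : α * ⟪ω₁, (A - c • 1) v⟫ = -1) :
    rankOnePert A α ω₁ ((A - c • 1) x) ((A - c • 1) v) = d • (A - c • 1) v := by
  rw [rankOnePert_apply, hx, ← hv]
  simp only [sub_apply, smul_apply, one_apply_eq_self, map_sub, map_smul]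
  module

theorem sub_smul_one_apply_comm (A : H →L[ℂ] H) (c d : ℂ) (x : H) :
    (A - c • 1) ((A - d • 1) x) = (A - d • 1) ((A - c • 1) x) := by
  simp only [sub_apply, smul_apply, one_apply_eq_self, map_sub, map_smul]
  module

theorem inner_sub_smul_one_eq_zero {A : H →L[ℂ] H} {μ : ℂ} {u φ ψ : H}
    (hu : (A - μ • 1) u = φ) (hψu : ⟪ψ, u⟫ ≠ 0) :
    ⟪ψ, (A - (μ + ⟪ψ, φ⟫ / ⟪ψ, u⟫) • 1) u⟫ = 0 := by
  rw [← hu]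
  simp only [sub_apply, smul_apply, one_apply_eq_self, inner_sub_right, inner_smul_right]
  field_simp
  ring

theorem inner_sub_smul_one_sq_of_inner_eq_zero {A : H →L[ℂ] H} {c : ℂ} {u ψ : H}
    (h : ⟪ψ, (A - c • 1) u⟫ = 0) (d : ℂ) :
    ⟪ψ, (A - c • 1) ((A - c • 1) u)⟫ = ⟪ψ, (A - c • 1) ((A - d • 1) u)⟫ := by
  have : (A - c • 1) u = (A - d • 1) u + (d - c) • u := by
    simp only [sub_apply, smul_apply, one_apply_eq_self]
    module
  rw [this, map_add, map_smul, inner_add_right, inner_smul_right, h, mul_zero, add_zero]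

theorem star_mul_inner_eq_neg_one {α : ℂ} {x y : H} (h : α * ⟪x, y⟫ = -1) :
    starRingEnd ℂ α * ⟪y, x⟫ = -1 := by
  rw [← inner_conj_symm, ← map_mul, h, map_neg, map_one]

variable [CompleteSpace H] {A : H →L[ℂ] H}

theorem IsSelfAdjoint.inner_sub_smul_one_left (hA : IsSelfAdjoint A) (c : ℂ) (x y : H) :
    ⟪(A - starRingEnd ℂ c • 1) x, y⟫ = ⟪x, (A - c • 1) y⟫ := by
  have : adjoint (A - c • 1) = A - starRingEnd ℂ c • 1 := by
    rw [← star_eq_adjoint, star_sub, star_smul, star_one, hA.star_eq]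
    rfl
  rw [← this, adjoint_inner_left]

theorem IsSelfAdjoint.inner_sub_smul_one_sub_smul_one (hA : IsSelfAdjoint A) {c d : ℂ}
    {u w φ ψ : H} (hu : (A - d • 1) u = φ) (hw : (A - starRingEnd ℂ d • 1) w = ψ) :
    ⟪(A - starRingEnd ℂ c • 1) w, (A - c • 1) φ⟫ = ⟪ψ, (A - c • 1) ((A - c • 1) u)⟫ := by
  rw [hA.inner_sub_smul_one_left, ← hu, sub_smul_one_apply_comm A c d,
    sub_smul_one_apply_comm A c d, ← hA.inner_sub_smul_one_left, hw]

end

theorem dual_pair_construction_general {H : Type*} [NormedAddCommGroup H] [InnerProductSpace ℂ H]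
    [CompleteSpace H] (A : H →L[ℂ] H) (hA : IsSelfAdjoint A) (μ : ℂ)
    (Rμ : H →L[ℂ] H) (hRμ1 : (A - μ • 1) ∘L Rμ = 1)
    (Sμ : H →L[ℂ] H)
    (hSμ1 : (A - (starRingEnd ℂ) μ • 1) ∘L Sμ = 1)
    (φ ψ : H) (h1 : ⟪ψ, Rμ φ⟫ ≠ 0)
    (lam : ℂ) (hlam : lam = μ + ⟪ψ, φ⟫ / ⟪ψ, Rμ φ⟫)
    (h2 : ⟪ψ, (A - lam • 1) φ⟫ ≠ 0)
    (α : ℂ) (hα : α = -(⟪ψ, (A - lam • 1) φ⟫)⁻¹)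
    (ω₁ ω₂ : H) (hω₁ : ω₁ = (A - (starRingEnd ℂ) lam • 1) ψ) (hω₂ : ω₂ = (A - lam • 1) φ) :
    rankOnePert A α ω₁ ω₂ φ = lam • φ ∧
    rankOnePert A α ω₁ ω₂ ((A - lam • 1) (Rμ φ)) = μ • (A - lam • 1) (Rμ φ) ∧
    (ContinuousLinearMap.adjoint (rankOnePert A α ω₁ ω₂)) ψ = (starRingEnd ℂ) lam • ψ ∧
    (ContinuousLinearMap.adjoint (rankOnePert A α ω₁ ω₂))
        ((A - (starRingEnd ℂ) lam • 1) (Sμ ψ))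
      = (starRingEnd ℂ) μ • (A - (starRingEnd ℂ) lam • 1) (Sμ ψ) := by
  have hu : (A - μ • 1) (Rμ φ) = φ := congr($hRμ1 φ)
  have hw : (A - starRingEnd ℂ μ • 1) (Sμ ψ) = ψ := congr($hSμ1 ψ)
  have hαφ : α * ⟪ψ, (A - lam • 1) φ⟫ = -1 := by rw [hα, neg_mul, inv_mul_cancel₀ h2]
  have hψlam : ⟪ψ, (A - lam • 1) (Rμ φ)⟫ = 0 := hlam ▸ inner_sub_smul_one_eq_zero hu h1
  have hαu : α * ⟪ψ, (A - lam • 1) ((A - lam • 1) (Rμ φ))⟫ = -1 := by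
    rwa [inner_sub_smul_one_sq_of_inner_eq_zero hψlam μ, hu]
  rw [adjoint_rankOnePert, hA.adjoint_eq, hω₁, hω₂]
  refine ⟨?_, ?_, ?_, ?_⟩
  · exact rankOnePert_apply_eq_smul_self (by rwa [hA.inner_sub_smul_one_left])
  · exact rankOnePert_apply_eq_smul_shift hu (by rwa [hA.inner_sub_smul_one_left])
  · exact rankOnePert_apply_eq_smul_self (star_mul_inner_eq_neg_one hαφ)
  · refine rankOnePert_apply_eq_smul_shift hw (star_mul_inner_eq_neg_one ?_)
    rwa [hA.inner_sub_smul_one_sub_smul_one hu hw]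

/-- Theorem 7 of the paper (regular-vector analogue): construction of an operator with a
prescribed dual pair of eigenvalues `(μ, λ)`, where
`λ = μ + (φ, ψ)/((A - μ)⁻¹φ, ψ)`, `ω₂ = (A - λ)φ`, `ω₁ = (A - λ̄)ψ`,
`α = -1/((A - λ)φ, ψ)`. -/
theorem dual_pair_construction {H : Type*} [NormedAddCommGroup H] [InnerProductSpace ℂ H]
    [CompleteSpace H] (A : H →L[ℂ] H) (hA : IsSelfAdjoint A) (μ : ℂ)
    (Rμ : H →L[ℂ] H) (hRμ1 : (A - μ • 1) ∘L Rμ = 1) (hRμ2 : Rμ ∘L (A - μ • 1) = 1)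
    (Sμ : H →L[ℂ] H)
    (hSμ1 : (A - (starRingEnd ℂ) μ • 1) ∘L Sμ = 1)
    (hSμ2 : Sμ ∘L (A - (starRingEnd ℂ) μ • 1) = 1)
    (φ ψ : H) (h1 : ⟪ψ, Rμ φ⟫ ≠ 0)
    (lam : ℂ) (hlam : lam = μ + ⟪ψ, φ⟫ / ⟪ψ, Rμ φ⟫)
    (h2 : ⟪ψ, (A - lam • 1) φ⟫ ≠ 0)
    (α : ℂ) (hα : α = -(⟪ψ, (A - lam • 1) φ⟫)⁻¹)
    (ω₁ ω₂ : H) (hω₁ : ω₁ = (A - (starRingEnd ℂ) lam • 1) ψ) (hω₂ : ω₂ = (A - lam • 1) φ) :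
    rankOnePert A α ω₁ ω₂ φ = lam • φ ∧
    rankOnePert A α ω₁ ω₂ ((A - lam • 1) (Rμ φ)) = μ • (A - lam • 1) (Rμ φ) ∧
    (ContinuousLinearMap.adjoint (rankOnePert A α ω₁ ω₂)) ψ = (starRingEnd ℂ) lam • ψ ∧
    (ContinuousLinearMap.adjoint (rankOnePert A α ω₁ ω₂))
        ((A - (starRingEnd ℂ) lam • 1) (Sμ ψ))
      = (starRingEnd ℂ) μ • (A - (starRingEnd ℂ) lam • 1) (Sμ ψ) :=
  dual_pair_construction_general A hA μ Rμ hRμ1 Sμ hSμ1 φ ψ h1 lam hlam h2 α hα ω₁ ω₂ hω₁ hω₂
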